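/- arXiv:1209.2849 — 2 statements merged into one kernel-verified Lean document; each statement's English description precedes it below -/
import Mathlib

section
/- Let z ∈ ℂ with z ≠ −α and z ∉ 𝒮, suppose the polynomial 𝒫_z(ρ) := (e^{zτ₀}(z+α)/2) ∏_{j=1}^{N}(ρ² − k_j(z)²) + Σ_{i=1}^{N} c_i k_i(z) ∏_{j≠i}(ρ² − k_j(z)²) has 2N pairwise distinct roots ±ρ₁,…,±ρ_N, that k_j(z) ≠ ±ρ_i for all i,j, that the 2N×2N matrix T(z) = [[T⁻, T⁺],[T⁺, T⁻]] with (T^∓)_{j,i} = 1/(k_j(z) ∓ ρ_i) is invertible, and that det S(z) ≠ 0, where S(z) = [[S⁻, S⁺],[S⁺, S⁻]] with (S⁻)_{j,i} = e^{ρ_i}/(k_j(z) − ρ_i) and (S⁺)_{j,i} = e^{−ρ_i}/(k_j(z) + ρ_i). Let y : [−1,1] → ℂ be continuous. Define, for x ∈ [−1,1], the ℂ^{2N}-valued function Γ̂(x) := ∫_{−1}^{x} (y(r)/(z+α)) · diag(P⁻(r), P⁺(r)) · T(z)^{−1} · (−𝟙, 𝟙) dr, where P^∓(r) := diag(e^{∓ρ₁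 r},…,e^{∓ρ_N r}) and (−𝟙, 𝟙) ∈ ℂ^{2N} has first N entries −1 and last N entries 1; set Γ₀ := −S(z)^{−1} · [[S⁻, S⁺, 0, 0],[0, 0, S⁺, S⁻]] · (Γ̂(1), Γ̂(−1)) and Γ(x) := Γ₀ + Γ̂(x), with components denoted γ₁(x),…,γ_N(x),γ_{−1}(x),…,γ_{−N}(x). Then the function q(x) := y(x)/(z+α) + Σ_{i=1}^{N} [ γ_i(x) e^{ρ_i x} + γ_{−i}(x) e^{−ρ_i x} ] satisfies Δ(z)q = y, i.e. (z+α)q(x) − ∫_{−1}^{1} J₀(x,r) e^{−zτ₀} e^{−z|x−r|} q(r) dr = y(x) for all x ∈ [−1,1]. -/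
open Set

/-- The connectivity kernel `J₀(x,r) = Σᵢ cᵢ e^{−μᵢ|x−r|}`. -/
noncomputable def kerJ0 {N : ℕ} (c μ : Fin N → ℂ) (x r : ℝ) : ℂ :=
  ∑ i, c i * Complex.exp (-μ i * ((|x - r| : ℝ) : ℂ))

/-- The operator `Δ(z)` acting on functions on `[-1,1]`. -/
noncomputable def DeltaOp {N : ℕ} (c μ : Fin N → ℂ) (τ0 : ℝ) (α z : ℂ)
    (q : ℝ → ℂ) (x : ℝ) : ℂ :=
  (z + α) * q x -
    ∫ r in (-1 : ℝ)..1,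
      kerJ0 c μ x r * Complex.exp (-z * (τ0 : ℂ)) *
        Complex.exp (-z * ((|x - r| : ℝ) : ℂ)) * q r

/-- The exceptional set `𝒮 = { z : (z+μᵢ)² = (z+μⱼ)² for some i ≠ j }`. -/
def badSet {N : ℕ} (μ : Fin N → ℂ) : Set ℂ :=
  {z : ℂ | ∃ i j : Fin N, i ≠ j ∧ (z + μ i) ^ 2 = (z + μ j) ^ 2}

/-- The characteristic polynomial
`𝒫_z(ρ) = (e^{zτ₀}(z+α)/2)·∏ⱼ(ρ²−kⱼ²) + Σᵢ cᵢ kᵢ ∏_{j≠i}(ρ²−kⱼ²)`, `kᵢ = z+μᵢ`. -/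
noncomputable def charP {N : ℕ} (c μ : Fin N → ℂ) (τ0 : ℝ) (α z ρ : ℂ) : ℂ :=
  Complex.exp (z * (τ0 : ℂ)) * (z + α) / 2 * ∏ j, (ρ ^ 2 - (z + μ j) ^ 2)
    + ∑ i, c i * (z + μ i) * ∏ j ∈ Finset.univ.erase i, (ρ ^ 2 - (z + μ j) ^ 2)

/-- The `2N×2N` block matrix `S(z) = [[S⁻,S⁺],[S⁺,S⁻]]` with
`(S⁻)_{j,i} = e^{ρᵢ}/(kⱼ−ρᵢ)`, `(S⁺)_{j,i} = e^{−ρᵢ}/(kⱼ+ρᵢ)`. -/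
noncomputable def Smat {N : ℕ} (μ : Fin N → ℂ) (z : ℂ) (ρ : Fin N → ℂ) :
    Matrix (Fin N ⊕ Fin N) (Fin N ⊕ Fin N) ℂ :=
  Matrix.fromBlocks
    (Matrix.of fun j i => Complex.exp (ρ i) / (z + μ j - ρ i))
    (Matrix.of fun j i => Complex.exp (-ρ i) / (z + μ j + ρ i))
    (Matrix.of fun j i => Complex.exp (-ρ i) / (z + μ j + ρ i))
    (Matrix.of fun j i => Complex.exp (ρ i) / (z + μ j - ρ i))

/-- The `2N×2N` block matrix `T(z) = [[T⁻,T⁺],[T⁺,T⁻]]` with `(T^∓)_{j,i} = 1/(kⱼ ∓ ρᵢ)`. -/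
noncomputable def Tmat {N : ℕ} (μ : Fin N → ℂ) (z : ℂ) (ρ : Fin N → ℂ) :
    Matrix (Fin N ⊕ Fin N) (Fin N ⊕ Fin N) ℂ :=
  Matrix.fromBlocks
    (Matrix.of fun j i => 1 / (z + μ j - ρ i))
    (Matrix.of fun j i => 1 / (z + μ j + ρ i))
    (Matrix.of fun j i => 1 / (z + μ j + ρ i))
    (Matrix.of fun j i => 1 / (z + μ j - ρ i))

/-- The block-diagonal matrix `diag(P⁻(r), P⁺(r))` with `P^∓(r) = diag(e^{∓ρᵢ r})`. -/
noncomputable def Pmat {N : ℕ} (ρ : Fin N → ℂ) (r : ℝ) :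
    Matrix (Fin N ⊕ Fin N) (Fin N ⊕ Fin N) ℂ :=
  Matrix.fromBlocks
    (Matrix.diagonal fun i => Complex.exp (-ρ i * (r : ℂ))) 0
    0 (Matrix.diagonal fun i => Complex.exp (ρ i * (r : ℂ)))

/-- The vector `(−𝟙, 𝟙) ∈ ℂ^{2N}`. -/
def vvec (N : ℕ) : Fin N ⊕ Fin N → ℂ := Sum.elim (fun _ => -1) (fun _ => 1)

/-- `Γ̂(x) = ∫_{−1}^{x} (y(r)/(z+α)) · diag(P⁻(r),P⁺(r)) · T(z)⁻¹ · (−𝟙,𝟙) dr`. -/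
noncomputable def GammaHat {N : ℕ} (μ ρ : Fin N → ℂ) (z α : ℂ) (y : ℝ → ℂ) (x : ℝ) :
    Fin N ⊕ Fin N → ℂ :=
  fun j => ∫ r in (-1 : ℝ)..x,
    (y r / (z + α)) * ((Pmat ρ r * (Tmat μ z ρ)⁻¹).mulVec (vvec N)) j

/-- `Γ₀ = −S(z)⁻¹ · [[S⁻,S⁺,0,0],[0,0,S⁺,S⁻]] · (Γ̂(1), Γ̂(−1))`. -/
noncomputable def Gamma0 {N : ℕ} (μ ρ : Fin N → ℂ) (z α : ℂ) (y : ℝ → ℂ) :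
    Fin N ⊕ Fin N → ℂ :=
  -((Smat μ z ρ)⁻¹.mulVec (Sum.elim
      (fun j => (Smat μ z ρ).mulVec (GammaHat μ ρ z α y 1) (Sum.inl j))
      (fun j => (Smat μ z ρ).mulVec (GammaHat μ ρ z α y (-1)) (Sum.inr j))))

/-- `Γ(x) = Γ₀ + Γ̂(x)`. -/
noncomputable def GammaFun {N : ℕ} (μ ρ : Fin N → ℂ) (z α : ℂ) (y : ℝ → ℂ) (x : ℝ) :
    Fin N ⊕ Fin N → ℂ :=
  Gamma0 μ ρ z α y + GammaHat μ ρ z α y x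

/-- The candidate resolvent function
`q(x) = y(x)/(z+α) + Σᵢ (γᵢ(x) e^{ρᵢx} + γ₋ᵢ(x) e^{−ρᵢx})`. -/
noncomputable def qRes {N : ℕ} (μ ρ : Fin N → ℂ) (z α : ℂ) (y : ℝ → ℂ) (x : ℝ) : ℂ :=
  y x / (z + α) + ∑ i,
    (GammaFun μ ρ z α y x (Sum.inl i) * Complex.exp (ρ i * (x : ℂ)) +
     GammaFun μ ρ z α y x (Sum.inr i) * Complex.exp (-ρ i * (x : ℂ)))

/-!
Write `ν = (ρ, -ρ)`, `β = T(z)⁻¹(-𝟙, 𝟙)` and `q = y/(z+α) + Σⱼ γⱼ e^{νⱼ x}` with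
`γⱼ' = βⱼ (y/(z+α)) e^{-νⱼ x}`. For `k = kᵢ(z)`, split `∫_{-1}^{1} e^{-k|x-r|} q(r) dr` at `r = x`
and integrate every `γⱼ`-term by parts. The integrals of `y` that come out carry the factors
`1 - Σⱼ βⱼ/(±k + νⱼ)`, which vanish because `T(z)β = (-𝟙, 𝟙)`; the boundary terms at `∓1`
vanish because `S(z)Γ₀` was chosen to cancel them. What is left is
`Σⱼ 2k/(k² - νⱼ²) γⱼ(x) e^{νⱼ x}`, and since `νⱼ` is a root of `𝒫_z`, summing over `i` with
weights `cᵢ e^{-zτ₀}` turns `Σᵢ cᵢ 2kᵢ/(kᵢ² - νⱼ²)` into `e^{zτ₀}(z+α)`. Hence `Δ(z)q = y`.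
-/

open MeasureTheory intervalIntegral Complex

theorem integral_exp_mul_primitive {h : ℝ → ℂ} (hh : Continuous h) {c : ℂ} (hc : c ≠ 0)
    (Γ₀ : ℂ) (p a b : ℝ) :
    ∫ r in a..b, exp (c * r) * (Γ₀ + ∫ s in p..r, h s) =
      exp (c * b) / c * (Γ₀ + ∫ s in p..b, h s) - exp (c * a) / c * (Γ₀ + ∫ s in p..a, h s)
        - 1 / c * ∫ s in a..b, exp (c * s) * h s := by
  have hu (t : ℝ) : HasDerivAt (fun r => Γ₀ + ∫ s in p..r, h s) (h t) t :=
    (integral_hasDerivAt_right (hh.intervalIntegrable _ _)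
      hh.aestronglyMeasurable.stronglyMeasurableAtFilter hh.continuousAt).const_add Γ₀
  have hv (t : ℝ) : HasDerivAt (fun r : ℝ => exp (c * r) / c) (exp (c * t)) t := by
    have := ((((hasDerivAt_id (t : ℂ)).const_mul c).cexp).comp_ofReal).div_const c
    simpa [mul_div_cancel_left₀ _ hc, mul_comm] using this
  have hexp : Continuous fun r : ℝ => exp (c * r) := by fun_prop
  have := integral_mul_deriv_eq_deriv_mul (fun t _ => hu t) (fun t _ => hv t)
    (hh.intervalIntegrable a b) (hexp.intervalIntegrable a b)
  have hcomm : ∫ s in a..b, h s * (exp (c * s) / c) = 1 / c * ∫ s in a..b, exp (c * s) * h s := by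
    rw [← intervalIntegral.integral_const_mul]
    exact integral_congr fun s _ => by ring
  rw [integral_congr fun r _ => mul_comm _ _, this, hcomm]
  ring

section Ansatz

variable {ι : Type*} (f : ℝ → ℂ) (ν β Γ₀ : ι → ℂ)

noncomputable def ansatzCoeff (j : ι) (r : ℝ) : ℂ :=
  Γ₀ j + ∫ s in (-1 : ℝ)..r, f s * (exp (-ν j * s) * β j)

noncomputable def ansatz [Fintype ι] (r : ℝ) : ℂ :=
  f r + ∑ j, ansatzCoeff f ν β Γ₀ j r * exp (ν j * r)

variable {f}

theorem continuous_ansatzCoeff (hf : Continuous f) (j : ι) :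
    Continuous (ansatzCoeff f ν β Γ₀ j) :=
  continuous_const.add (continuous_primitive (fun _ _ => Continuous.intervalIntegrable
    (by fun_prop) _ _) _)

theorem ansatzCoeff_neg_one (j : ι) : ansatzCoeff f ν β Γ₀ j (-1) = Γ₀ j := by
  simp [ansatzCoeff]

theorem integral_exp_mul_ansatzCoeff (hf : Continuous f) (j : ι) {κ : ℂ} (hκ : κ + ν j ≠ 0)
    (a b : ℝ) :
    ∫ r in a..b, exp ((κ + ν j) * r) * ansatzCoeff f ν β Γ₀ j r =
      exp ((κ + ν j) * b) / (κ + ν j) * ansatzCoeff f ν β Γ₀ j b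
        - exp ((κ + ν j) * a) / (κ + ν j) * ansatzCoeff f ν β Γ₀ j a
        - β j / (κ + ν j) * ∫ r in a..b, exp (κ * r) * f r := by
  have hshift : ∫ s in a..b, exp ((κ + ν j) * s) * (f s * (exp (-ν j * s) * β j)) =
      β j * ∫ r in a..b, exp (κ * r) * f r := by
    rw [← intervalIntegral.integral_const_mul]
    refine integral_congr fun s _ => ?_
    simp only [add_mul, neg_mul, exp_add, exp_neg]
    field_simp
  unfold ansatzCoeff
  rw [integral_exp_mul_primitive (by fun_prop) hκ, hshift]
  ring

variable [Fintype ι]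

theorem continuous_ansatz (hf : Continuous f) : Continuous (ansatz f ν β Γ₀) := by
  have := continuous_ansatzCoeff ν β Γ₀ hf
  unfold ansatz
  fun_prop

theorem integral_exp_mul_ansatz (hf : Continuous f) {κ : ℂ} (hκ : ∀ j, κ + ν j ≠ 0) (a b : ℝ) :
    ∫ r in a..b, exp (κ * r) * ansatz f ν β Γ₀ r =
      exp (κ * b) * ∑ j, exp (ν j * b) / (κ + ν j) * ansatzCoeff f ν β Γ₀ j b
        - exp (κ * a) * ∑ j, exp (ν j * a) / (κ + ν j) * ansatzCoeff f ν β Γ₀ j a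
        + (1 - ∑ j, β j / (κ + ν j)) * ∫ r in a..b, exp (κ * r) * f r := by
  have hγ := continuous_ansatzCoeff ν β Γ₀ hf
  have hexpand : ∫ r in a..b, exp (κ * r) * ansatz f ν β Γ₀ r =
      (∫ r in a..b, exp (κ * r) * f r)
        + ∑ j, ∫ r in a..b, exp ((κ + ν j) * r) * ansatzCoeff f ν β Γ₀ j r := by
    rw [← intervalIntegral.integral_finsetSum
        fun j _ => Continuous.intervalIntegrable (by fun_prop) _ _,
      ← integral_add (Continuous.intervalIntegrable (by fun_prop) _ _)
        (Continuous.intervalIntegrable (by fun_prop) _ _)]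
    refine integral_congr fun r _ => ?_
    simp only [ansatz, mul_add, Finset.mul_sum, add_mul, exp_add]
    congr 1
    exact Finset.sum_congr rfl fun j _ => by ring
  have hfactor (t : ℝ) : ∑ j, exp ((κ + ν j) * t) / (κ + ν j) * ansatzCoeff f ν β Γ₀ j t =
      exp (κ * t) * ∑ j, exp (ν j * t) / (κ + ν j) * ansatzCoeff f ν β Γ₀ j t := by
    rw [Finset.mul_sum]
    exact Finset.sum_congr rfl fun j _ => by rw [add_mul, exp_add]; ring
  rw [hexpand, Finset.sum_congr rfl fun j _ => integral_exp_mul_ansatzCoeff ν β Γ₀ hf j (hκ j) a b,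
    Finset.sum_sub_distrib, Finset.sum_sub_distrib, hfactor, hfactor, ← Finset.sum_mul]
  ring

theorem integral_exp_neg_abs_mul_ansatz (hf : Continuous f) {k : ℂ}
    (hk : ∀ j, k + ν j ≠ 0) (hk' : ∀ j, -k + ν j ≠ 0)
    (hrow : ∑ j, β j / (k + ν j) = 1) (hrow' : ∑ j, β j / (-k + ν j) = 1)
    (hleft : ∑ j, exp (-ν j) / (k + ν j) * Γ₀ j = 0)
    (hright : ∑ j, exp (ν j) / (-k + ν j) * ansatzCoeff f ν β Γ₀ j 1 = 0)
    {x : ℝ} (hx : x ∈ Icc (-1 : ℝ) 1) :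
    ∫ r in (-1 : ℝ)..1, exp (-k * ((|x - r| : ℝ) : ℂ)) * ansatz f ν β Γ₀ r =
      ∑ j, 2 * k / (k ^ 2 - ν j ^ 2) * (ansatzCoeff f ν β Γ₀ j x * exp (ν j * x)) := by
  have hQ := continuous_ansatz ν β Γ₀ hf
  have hsplit : ∫ r in (-1 : ℝ)..1, exp (-k * ((|x - r| : ℝ) : ℂ)) * ansatz f ν β Γ₀ r =
      exp (-k * x) * (∫ r in (-1 : ℝ)..x, exp (k * r) * ansatz f ν β Γ₀ r)
        + exp (k * x) * ∫ r in x..1, exp (-k * r) * ansatz f ν β Γ₀ r := by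
    rw [← integral_add_adjacent_intervals (b := x) (Continuous.intervalIntegrable (by fun_prop) _ _)
      (Continuous.intervalIntegrable (by fun_prop) _ _),
      ← intervalIntegral.integral_const_mul, ← intervalIntegral.integral_const_mul]
    congr 1 <;> refine integral_congr fun r hr => ?_
    · rw [uIcc_of_le hx.1] at hr
      rw [abs_of_nonneg (sub_nonneg.2 hr.2), ← mul_assoc, ← exp_add]
      push_cast
      ring_nf
    · rw [uIcc_of_le hx.2] at hr
      rw [abs_of_nonpos (sub_nonpos.2 hr.1), ← mul_assoc, ← exp_add]
      push_cast
      ring_nf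
  have hpartial : ∑ j, exp (ν j * x) / (k + ν j) * ansatzCoeff f ν β Γ₀ j x
      - ∑ j, exp (ν j * x) / (-k + ν j) * ansatzCoeff f ν β Γ₀ j x =
      ∑ j, 2 * k / (k ^ 2 - ν j ^ 2) * (ansatzCoeff f ν β Γ₀ j x * exp (ν j * x)) := by
    rw [← Finset.sum_sub_distrib]
    refine Finset.sum_congr rfl fun j _ => ?_
    have hsq : k ^ 2 - ν j ^ 2 = -((k + ν j) * (-k + ν j)) := by ring
    rw [hsq]
    field_simp [hk j, hk' j]
    ring
  have hcancel : exp (-k * x) * exp (k * x) = 1 := by rw [← exp_add]; simp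
  rw [hsplit, integral_exp_mul_ansatz ν β Γ₀ hf hk, integral_exp_mul_ansatz ν β Γ₀ hf hk',
    hrow, hrow']
  simp only [ansatzCoeff_neg_one, ofReal_neg, ofReal_one, mul_neg, mul_one, hleft, hright]
  linear_combination hpartial + (∑ j, exp (ν j * x) / (k + ν j) * ansatzCoeff f ν β Γ₀ j x
    - ∑ j, exp (ν j * x) / (-k + ν j) * ansatzCoeff f ν β Γ₀ j x) * hcancel

end Ansatz

section Delta

variable {N : ℕ} (c μ : Fin N → ℂ) (τ0 : ℝ) (α z : ℂ)

theorem DeltaOp_congr {q q' : ℝ → ℂ} (h : EqOn q q' (Icc (-1) 1)) {x : ℝ}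
    (hx : x ∈ Icc (-1 : ℝ) 1) : DeltaOp c μ τ0 α z q x = DeltaOp c μ τ0 α z q' x := by
  unfold DeltaOp
  rw [h hx, integral_congr fun r hr => ?_]
  rw [uIcc_of_le (by norm_num)] at hr
  simp only [h hr]

theorem DeltaOp_eq_sub_sum {q : ℝ → ℂ} (hq : IntervalIntegrable q volume (-1) 1) (x : ℝ) :
    DeltaOp c μ τ0 α z q x = (z + α) * q x -
      ∑ i, c i * exp (-z * τ0) *
        ∫ r in (-1 : ℝ)..1, exp (-(z + μ i) * ((|x - r| : ℝ) : ℂ)) * q r := by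
  have hint (i : Fin N) : IntervalIntegrable
      (fun r => c i * exp (-z * τ0) * (exp (-(z + μ i) * ((|x - r| : ℝ) : ℂ)) * q r))
      volume (-1) 1 :=
    (hq.continuousOn_mul (Continuous.continuousOn (by fun_prop))).const_mul _
  unfold DeltaOp
  simp only [← intervalIntegral.integral_const_mul]
  rw [← intervalIntegral.integral_finsetSum fun i _ => hint i]
  congr 1
  refine integral_congr fun r _ => ?_
  simp only [kerJ0, Finset.sum_mul]
  refine Finset.sum_congr rfl fun i _ => ?_
  rw [show -(z + μ i) * ((|x - r| : ℝ) : ℂ) =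
      -μ i * (|x - r| : ℝ) + -z * ((|x - r| : ℝ) : ℂ) by ring,
    exp_add]
  ring

theorem charP_neg (ρ : ℂ) : charP c μ τ0 α z (-ρ) = charP c μ τ0 α z ρ := by
  simp [charP]

theorem charP_eq_prod_mul {ρ : ℂ} (hk : ∀ j, ρ ^ 2 - (z + μ j) ^ 2 ≠ 0) :
    charP c μ τ0 α z ρ = (∏ j, (ρ ^ 2 - (z + μ j) ^ 2)) *
      (exp (z * τ0) * (z + α) / 2 - ∑ i, c i * (z + μ i) / ((z + μ i) ^ 2 - ρ ^ 2)) := by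
  rw [charP, mul_sub, Finset.mul_sum, sub_eq_add_neg, ← Finset.sum_neg_distrib, mul_comm]
  congr 1
  refine Finset.sum_congr rfl fun i _ => ?_
  rw [← Finset.mul_prod_erase _ _ (Finset.mem_univ i)]
  have hki : (z + μ i) ^ 2 - ρ ^ 2 ≠ 0 := fun h => hk i (by linear_combination -h)
  field_simp
  ring

theorem exp_mul_sum_eq_of_charP_eq_zero {ρ : ℂ} (hroot : charP c μ τ0 α z ρ = 0)
    (hk : ∀ j, ρ ^ 2 - (z + μ j) ^ 2 ≠ 0) :
    exp (-z * τ0) * ∑ i, c i * (2 * (z + μ i) / ((z + μ i) ^ 2 - ρ ^ 2)) = z + α := by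
  rw [charP_eq_prod_mul c μ τ0 α z hk, mul_eq_zero, sub_eq_zero] at hroot
  have hsum := hroot.resolve_left (Finset.prod_ne_zero_iff.2 fun j _ => hk j)
  have hexp : exp (-z * τ0) * exp (z * τ0) = 1 := by rw [← exp_add]; simp
  have htwice : ∑ i, c i * (2 * (z + μ i) / ((z + μ i) ^ 2 - ρ ^ 2)) =
      2 * ∑ i, c i * (z + μ i) / ((z + μ i) ^ 2 - ρ ^ 2) := by
    rw [Finset.mul_sum]
    exact Finset.sum_congr rfl fun i _ => by ring
  rw [htwice, ← hsum]
  linear_combination (z + α) * hexp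

end Delta

def signedRoots {N : ℕ} (ρ : Fin N → ℂ) : Fin N ⊕ Fin N → ℂ := Sum.elim ρ (-ρ)

@[simp] theorem signedRoots_inl {N : ℕ} (ρ : Fin N → ℂ) (i : Fin N) :
    signedRoots ρ (Sum.inl i) = ρ i := rfl

@[simp] theorem signedRoots_inr {N : ℕ} (ρ : Fin N → ℂ) (i : Fin N) :
    signedRoots ρ (Sum.inr i) = -ρ i := rfl

section Matrices

variable {N : ℕ} (μ ρ : Fin N → ℂ) (z : ℂ)

theorem Tmat_inl_apply (i : Fin N) (j : Fin N ⊕ Fin N) :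
    Tmat μ z ρ (Sum.inl i) j = 1 / (z + μ i - signedRoots ρ j) := by
  cases j <;> simp [Tmat]

theorem Tmat_inr_apply (i : Fin N) (j : Fin N ⊕ Fin N) :
    Tmat μ z ρ (Sum.inr i) j = 1 / (z + μ i + signedRoots ρ j) := by
  cases j <;> simp [Tmat, ← sub_eq_add_neg]

theorem Smat_inl_apply (i : Fin N) (j : Fin N ⊕ Fin N) :
    Smat μ z ρ (Sum.inl i) j = exp (signedRoots ρ j) / (z + μ i - signedRoots ρ j) := by
  cases j <;> simp [Smat]

theorem Smat_inr_apply (i : Fin N) (j : Fin N ⊕ Fin N) :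
    Smat μ z ρ (Sum.inr i) j = exp (-signedRoots ρ j) / (z + μ i + signedRoots ρ j) := by
  cases j <;> simp [Smat, ← sub_eq_add_neg]

theorem Pmat_eq_diagonal (r : ℝ) :
    Pmat ρ r = Matrix.diagonal fun j => exp (-signedRoots ρ j * r) := by
  rw [Pmat, Matrix.fromBlocks_diagonal]
  congr 1
  funext j
  cases j <;> simp

end Matrices

section Resolvent

open Matrix

variable {N : ℕ} (μ ρ : Fin N → ℂ) (z α : ℂ) (y : ℝ → ℂ)

theorem GammaHat_neg_one : GammaHat μ ρ z α y (-1) = 0 := by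
  funext j
  simp [GammaHat]

theorem GammaFun_eq_ansatzCoeff {f : ℝ → ℂ} (hf : EqOn f (fun t => y t / (z + α)) (Icc (-1) 1))
    {x : ℝ} (hx : x ∈ Icc (-1 : ℝ) 1) (j : Fin N ⊕ Fin N) :
    GammaFun μ ρ z α y x j =
      ansatzCoeff f (signedRoots ρ) ((Tmat μ z ρ)⁻¹ *ᵥ vvec N) (Gamma0 μ ρ z α y) j x := by
  rw [GammaFun, Pi.add_apply, ansatzCoeff, GammaHat]
  congr 1
  refine integral_congr fun r hr => ?_
  rw [uIcc_of_le hx.1] at hr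
  simp only [← mulVec_mulVec, Pmat_eq_diagonal, mulVec_diagonal, hf ⟨hr.1, hr.2.trans hx.2⟩]

theorem qRes_eqOn_ansatz {f : ℝ → ℂ} (hf : EqOn f (fun t => y t / (z + α)) (Icc (-1) 1)) :
    EqOn (qRes μ ρ z α y)
      (ansatz f (signedRoots ρ) ((Tmat μ z ρ)⁻¹ *ᵥ vvec N) (Gamma0 μ ρ z α y)) (Icc (-1) 1) := by
  intro x hx
  simp only [qRes, ansatz, hf hx, GammaFun_eq_ansatzCoeff μ ρ z α y hf hx, Fintype.sum_sum_type,
    signedRoots_inl, signedRoots_inr, Finset.sum_add_distrib]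

theorem Smat_mulVec_Gamma0_inr (hS : (Smat μ z ρ).det ≠ 0) (i : Fin N) :
    (Smat μ z ρ *ᵥ Gamma0 μ ρ z α y) (Sum.inr i) = 0 := by
  rw [Gamma0, mulVec_neg, mulVec_mulVec, mul_nonsing_inv _ (Ne.isUnit hS), one_mulVec]
  simp [GammaHat_neg_one]

theorem Smat_mulVec_GammaFun_one_inl (hS : (Smat μ z ρ).det ≠ 0) (i : Fin N) :
    (Smat μ z ρ *ᵥ GammaFun μ ρ z α y 1) (Sum.inl i) = 0 := by
  rw [GammaFun, mulVec_add, Gamma0, mulVec_neg, mulVec_mulVec, mul_nonsing_inv _ (Ne.isUnit hS),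
    one_mulVec]
  simp

theorem add_signedRoots_ne_zero_and_sub_signedRoots_ne_zero
    (hkρ : ∀ i j, z + μ j ≠ ρ i ∧ z + μ j ≠ -ρ i) (i : Fin N) (j : Fin N ⊕ Fin N) :
    z + μ i + signedRoots ρ j ≠ 0 ∧ z + μ i - signedRoots ρ j ≠ 0 := by
  rcases j with m | m <;> obtain ⟨hne, hne'⟩ := hkρ m i <;>
    simp only [signedRoots_inl, signedRoots_inr]
  · exact ⟨fun h => hne' (by linear_combination h), fun h => hne (by linear_combination h)⟩
  · exact ⟨fun h => hne (by linear_combination h), fun h => hne' (by linear_combination h)⟩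

theorem integral_exp_neg_abs_mul_resolventAnsatz
    {f : ℝ → ℂ} (hf : Continuous f) (hfy : EqOn f (fun t => y t / (z + α)) (Icc (-1) 1))
    (hT : IsUnit (Tmat μ z ρ).det) (hS : (Smat μ z ρ).det ≠ 0) (i : Fin N)
    (hkν : ∀ j, z + μ i + signedRoots ρ j ≠ 0 ∧ z + μ i - signedRoots ρ j ≠ 0)
    {x : ℝ} (hx : x ∈ Icc (-1 : ℝ) 1) :
    ∫ r in (-1 : ℝ)..1, exp (-(z + μ i) * ((|x - r| : ℝ) : ℂ)) *
        ansatz f (signedRoots ρ) ((Tmat μ z ρ)⁻¹ *ᵥ vvec N) (Gamma0 μ ρ z α y) r =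
      ∑ j, 2 * (z + μ i) / ((z + μ i) ^ 2 - signedRoots ρ j ^ 2) *
        (ansatzCoeff f (signedRoots ρ) ((Tmat μ z ρ)⁻¹ *ᵥ vvec N) (Gamma0 μ ρ z α y) j x *
          exp (signedRoots ρ j * x)) := by
  have hflip (j : Fin N ⊕ Fin N) : -(z + μ i) + signedRoots ρ j = -(z + μ i - signedRoots ρ j) := by
    ring
  have hTβ : Tmat μ z ρ *ᵥ ((Tmat μ z ρ)⁻¹ *ᵥ vvec N) = vvec N := by
    rw [mulVec_mulVec, mul_nonsing_inv _ hT, one_mulVec]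
  have hrow := congrFun hTβ (Sum.inr i)
  have hrow' := congrFun hTβ (Sum.inl i)
  have hleft := Smat_mulVec_Gamma0_inr μ ρ z α y hS i
  have hright := Smat_mulVec_GammaFun_one_inl μ ρ z α y hS i
  rw [mulVec, dotProduct] at hrow hrow' hleft hright
  simp only [Tmat_inr_apply, Tmat_inl_apply, Smat_inr_apply, Smat_inl_apply, one_div_mul_eq_div,
    vvec, Sum.elim_inl, Sum.elim_inr,
    GammaFun_eq_ansatzCoeff μ ρ z α y hfy (right_mem_Icc.2 (by norm_num))]
    at hrow hrow' hleft hright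
  refine integral_exp_neg_abs_mul_ansatz _ _ _ hf (fun j => (hkν j).1)
    (fun j => by rw [hflip]; exact neg_ne_zero.2 (hkν j).2) hrow ?_ hleft ?_ hx
  · simp only [hflip, div_neg, Finset.sum_neg_distrib, hrow', neg_neg]
  · simp only [hflip, div_neg, neg_mul, Finset.sum_neg_distrib, hright, neg_zero]

theorem sum_integral_exp_neg_abs_mul_resolventAnsatz (c : Fin N → ℂ) (τ0 : ℝ)
    {f : ℝ → ℂ} (hf : Continuous f) (hfy : EqOn f (fun t => y t / (z + α)) (Icc (-1) 1))
    (hroot : ∀ i, charP c μ τ0 α z (ρ i) = 0) (hkρ : ∀ i j, z + μ j ≠ ρ i ∧ z + μ j ≠ -ρ i)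
    (hT : IsUnit (Tmat μ z ρ).det) (hS : (Smat μ z ρ).det ≠ 0) {x : ℝ} (hx : x ∈ Icc (-1 : ℝ) 1) :
    ∑ i, c i * exp (-z * τ0) * ∫ r in (-1 : ℝ)..1, exp (-(z + μ i) * ((|x - r| : ℝ) : ℂ)) *
        ansatz f (signedRoots ρ) ((Tmat μ z ρ)⁻¹ *ᵥ vvec N) (Gamma0 μ ρ z α y) r =
      (z + α) * ∑ j,
        ansatzCoeff f (signedRoots ρ) ((Tmat μ z ρ)⁻¹ *ᵥ vvec N) (Gamma0 μ ρ z α y) j x *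
          exp (signedRoots ρ j * x) := by
  have hkν := add_signedRoots_ne_zero_and_sub_signedRoots_ne_zero μ ρ z hkρ
  simp only [integral_exp_neg_abs_mul_resolventAnsatz μ ρ z α y hf hfy hT hS _ (hkν _) hx,
    Finset.mul_sum, ← mul_assoc]
  rw [Finset.sum_comm]
  refine Finset.sum_congr rfl fun j _ => ?_
  have hcoef := exp_mul_sum_eq_of_charP_eq_zero c μ τ0 α z (ρ := signedRoots ρ j)
    (by rcases j with m | m <;> simp [charP_neg, hroot m])
    fun i h => mul_ne_zero (hkν i j).1 (hkν i j).2 (by linear_combination -h)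
  rw [← hcoef, Finset.mul_sum, Finset.sum_mul, Finset.sum_mul]
  exact Finset.sum_congr rfl fun i _ => by ring

end Resolvent

theorem stmt15_general (N : ℕ) (τ0 : ℝ) (α : ℂ)
    (c μ : Fin N → ℂ)
    (z : ℂ) (hz1 : z ≠ -α)
    (ρ : Fin N → ℂ)
    (hroot : ∀ i, charP c μ τ0 α z (ρ i) = 0)
    (hkρ : ∀ i j, z + μ j ≠ ρ i ∧ z + μ j ≠ -ρ i)
    (hT : IsUnit (Tmat μ z ρ).det)
    (hS : (Smat μ z ρ).det ≠ 0)
    (y : ℝ → ℂ) (hy : ContinuousOn y (Icc (-1) 1)) :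
    ∀ x ∈ Icc (-1 : ℝ) 1, DeltaOp c μ τ0 α z (qRes μ ρ z α y) x = y x := by
  intro x hx
  set f : ℝ → ℂ := fun t => y (projIcc (-1) 1 (by norm_num) t) / (z + α)
  have hf : Continuous f := (hy.comp_continuous (continuous_subtype_val.comp continuous_projIcc)
    fun t => (projIcc _ _ _ t).2).div_const _
  have hfy : EqOn f (fun t => y t / (z + α)) (Icc (-1) 1) := fun t ht => by
    simp [f, projIcc_of_mem _ ht]
  rw [DeltaOp_congr c μ τ0 α z (qRes_eqOn_ansatz μ ρ z α y hfy) hx,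
    DeltaOp_eq_sub_sum c μ τ0 α z ((continuous_ansatz _ _ _ hf).intervalIntegrable _ _),
    sum_integral_exp_neg_abs_mul_resolventAnsatz μ ρ z α y c τ0 hf hfy hroot hkρ hT hS hx,
    ansatz, hfy hx, mul_add, mul_div_cancel₀ _ fun h => hz1 (eq_neg_of_add_eq_zero_left h),
    add_sub_cancel_right]

/-- Under the stated nondegeneracy conditions on `z` (not `−α`, not in
`𝒮`, the characteristic polynomial has `2N` distinct roots `±ρᵢ` with `kⱼ ≠ ±ρᵢ`, `T(z)`
invertible, `det S(z) ≠ 0`), the explicit variation-of-constants function `q` built from a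
continuous `y` satisfies `Δ(z)q = y` on `[−1,1]`. -/
theorem stmt15 (N : ℕ) (hN : 1 ≤ N) (τ0 : ℝ) (hτ0 : 0 ≤ τ0) (α : ℂ)
    (c μ : Fin N → ℂ) (hc : ∀ i, c i ≠ 0) (hμ : Function.Injective μ)
    (z : ℂ) (hz1 : z ≠ -α) (hz2 : z ∉ badSet μ)
    (ρ : Fin N → ℂ)
    (hρ0 : ∀ i, ρ i ≠ 0)
    (hρd : ∀ i j, i ≠ j → ρ i ≠ ρ j ∧ ρ i ≠ -ρ j)
    (hroot : ∀ i, charP c μ τ0 α z (ρ i) = 0)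
    (hkρ : ∀ i j, z + μ j ≠ ρ i ∧ z + μ j ≠ -ρ i)
    (hT : IsUnit (Tmat μ z ρ).det)
    (hS : (Smat μ z ρ).det ≠ 0)
    (y : ℝ → ℂ) (hy : ContinuousOn y (Icc (-1) 1)) :
    ∀ x ∈ Icc (-1 : ℝ) 1, DeltaOp c μ τ0 α z (qRes μ ρ z α y) x = y x :=
  stmt15_general N τ0 α c μ z hz1 ρ hroot hkρ hT hS y hy
end

section
/- Let Y be a complex Banach space, h > 0, X := C([−h,0],Y), L : X → Y a bounded linear operator, and α, λ ∈ ℂ. Define L_λ ∈ L(Y) by L_λ y := L(θ ↦ e^{λθ}·y) and Δ(λ) := (λ+α)·Id_Y − L_λ. Assume Δ(λ) : Y → Y is bijective with bounded inverse. Then for every y ∈ Y, the function ψ(θ) := e^{λθ}·Δ(λ)^{−1}y is the unique continuously differentiable function ψ : [−h,0] → Y satisfying both λ·ψ(0) + α·ψ(0) − Lψ = y and ψ′(θ) = λ·ψ(θ) for all θ ∈ [−h,0]. -/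
open Set

/-- The continuous map `θ ↦ e^{λθ}·v` on `[-h,0]`, for `v` in a complex normed space. -/
noncomputable def expTensor {Y : Type*} [NormedAddCommGroup Y] [NormedSpace ℂ Y]
    (h : ℝ) (lam : ℂ) (v : Y) : C(Set.Icc (-h) (0 : ℝ), Y) :=
  ⟨fun θ => Complex.exp (lam * ((θ : ℝ) : ℂ)) • v, by fun_prop⟩

/-! Every solution of `ψ' = λψ` on `[-h, 0]` is `θ ↦ e^{λθ}·ψ(0)`, because `e^{-λθ}·ψ(θ)`
has derivative zero. Solutions satisfying the boundary condition are thus exactly the `e^{λ·}·v`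
with `Δ(λ)v = y`, and invertibility of `Δ(λ)` forces `v = Δ(λ)⁻¹y`. -/

section

variable {Y : Type*} [NormedAddCommGroup Y] [NormedSpace ℂ Y]

theorem hasDerivAt_cexp_mul_smul (lam : ℂ) (v : Y) (t : ℝ) :
    HasDerivAt (fun s : ℝ => Complex.exp (lam * (s : ℂ)) • v)
      (lam • Complex.exp (lam * (t : ℂ)) • v) t := by
  have hlin : HasDerivAt (fun s : ℝ => lam * (s : ℂ)) lam t := by
    simpa using Complex.ofRealCLM.hasDerivAt.const_mul lam
  simpa [smul_smul, mul_comm] using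
    ((Complex.hasDerivAt_exp _).comp t hlin).smul_const v

theorem cexp_neg_mul_smul_eq_of_hasDerivWithinAt {s : Set ℝ} (hs : Convex ℝ s) {f : ℝ → Y}
    {lam : ℂ} (hf : ∀ t ∈ s, HasDerivWithinAt f (lam • f t) s t) {t₀ t : ℝ}
    (ht₀ : t₀ ∈ s) (ht : t ∈ s) :
    Complex.exp (-(lam * t)) • f t = Complex.exp (-(lam * t₀)) • f t₀ := by
  have hzero : ∀ u ∈ s,
      HasDerivWithinAt (fun r : ℝ => Complex.exp (-(lam * r)) • f r) 0 s u := by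
    intro u hu
    have hexp := (hasDerivAt_cexp_mul_smul (-lam) (1 : ℂ) u).hasDerivWithinAt (s := s)
    simp only [neg_mul, smul_eq_mul, mul_one] at hexp
    convert hexp.smul (hf u hu) using 1
    · rfl
    · simp only [smul_smul, mul_comm lam, neg_smul, add_neg_cancel]
  have hle := hs.norm_image_sub_le_of_norm_hasDerivWithin_le hzero (C := 0)
    (fun _ _ => by simp) ht₀ ht
  simpa [sub_eq_zero] using hle

variable {h : ℝ}

theorem expTensor_apply_of_eq_zero (lam : ℂ) (v : Y) {θ : Icc (-h) (0 : ℝ)}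
    (hθ : (θ : ℝ) = 0) :
    expTensor h lam v θ = v := by
  simp [expTensor, hθ]

theorem eq_expTensor_of_hasDerivWithinAt (hh : -h ≤ 0) {lam : ℂ} (ψ : C(Icc (-h) (0 : ℝ), Y))
    (hψ : ∀ θ : Icc (-h) (0 : ℝ), HasDerivWithinAt (fun s : ℝ => ψ (projIcc (-h) 0 hh s))
      (lam • ψ θ) (Icc (-h) 0) θ) :
    ψ = expTensor h lam (ψ ⟨0, right_mem_Icc.2 hh⟩) := by
  have hf : ∀ t ∈ Icc (-h) 0, HasDerivWithinAt (fun s : ℝ => ψ (projIcc (-h) 0 hh s))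
      (lam • ψ (projIcc (-h) 0 hh t)) (Icc (-h) 0) t := fun t ht => by
    simpa [projIcc_of_mem hh ht] using hψ ⟨t, ht⟩
  ext θ
  have hinv := cexp_neg_mul_smul_eq_of_hasDerivWithinAt (convex_Icc (-h) 0) hf
    (right_mem_Icc.2 hh) θ.2
  have hscaled := congrArg (Complex.exp (lam * (θ : ℝ)) • ·) hinv
  simpa [expTensor, smul_smul, ← Complex.exp_add, projIcc_val] using hscaled

end

/-- If `Δ(λ) = (λ+α)·Id − L_λ` is bijective with bounded inverse, then for
every `y ∈ Y` the function `ψ(θ) = e^{λθ}·Δ(λ)⁻¹y` is the unique `C¹` function on `[−h,0]`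
satisfying `λψ(0) + αψ(0) − Lψ = y` and `ψ′ = λψ`. -/
theorem stmt16 {Y : Type*} [NormedAddCommGroup Y] [NormedSpace ℂ Y]
    {h : ℝ} (hh : 0 < h)
    (L : C(Set.Icc (-h) (0 : ℝ), Y) →L[ℂ] Y) (α lam : ℂ)
    (Δinv : Y →L[ℂ] Y)
    (hΔ1 : ∀ v : Y, Δinv ((lam + α) • v - L (expTensor h lam v)) = v)
    (hΔ2 : ∀ v : Y, (lam + α) • Δinv v - L (expTensor h lam (Δinv v)) = v)
    (y : Y) :
    (∀ θ : Set.Icc (-h) (0 : ℝ),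
      HasDerivWithinAt (fun s : ℝ => Complex.exp (lam * (s : ℂ)) • Δinv y)
        (lam • (Complex.exp (lam * ((θ : ℝ) : ℂ)) • Δinv y)) (Set.Icc (-h) 0) (θ : ℝ)) ∧
    (lam • expTensor h lam (Δinv y) ⟨0, by constructor <;> linarith⟩
      + α • expTensor h lam (Δinv y) ⟨0, by constructor <;> linarith⟩
      - L (expTensor h lam (Δinv y)) = y) ∧
    ∀ ψ : C(Set.Icc (-h) (0 : ℝ), Y),
      (∀ θ : Set.Icc (-h) (0 : ℝ),
        HasDerivWithinAt (fun s : ℝ => ψ (Set.projIcc (-h) 0 (by linarith) s)) (lam • ψ θ)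
          (Set.Icc (-h) 0) (θ : ℝ)) →
      lam • ψ ⟨0, by constructor <;> linarith⟩ + α • ψ ⟨0, by constructor <;> linarith⟩
        - L ψ = y →
      ψ = expTensor h lam (Δinv y) := by
  refine ⟨fun θ => (hasDerivAt_cexp_mul_smul lam _ θ).hasDerivWithinAt, ?_, ?_⟩
  · rw [expTensor_apply_of_eq_zero _ _ rfl, ← add_smul]
    exact hΔ2 y
  · intro ψ hψ hbc
    have hψexp := eq_expTensor_of_hasDerivWithinAt (by linarith) ψ hψ
    rw [← add_smul, hψexp, expTensor_apply_of_eq_zero _ _ rfl] at hbc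
    rw [hψexp, ← hbc, hΔ1]
end
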